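/- With the definitions of the half-point speeds and metric terms given below, for all integers j, k and all t: (i) d/dt [ (1/2)(Υ_{j,k+1/2} + Υ_{j,k−1/2}) ] = ẋ_{j+1/2,k} − ẋ_{j−1/2,k}; (ii) d/dt [ (1/2)(X_{j+1/2,k} + X_{j−1/2,k}) ] = ẏ_{j,k+1/2} − ẏ_{j,k−1/2}; (iii) d/dt [ (1/2)(Ξ_{j,k+1/2} + Ξ_{j,k−1/2}) ] = −(ẏ_{j+1/2,k} − ẏ_{j−1/2,k}); (iv) d/dt [ (1/2)(Y_{j+1/2,k} + Y_{j−1/2,k}) ] = −(ẋ_{j,k+1/2} − ẋ_{j,k−1/2}). -/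

import Mathlib

/-!
Each metric term is a fixed linear combination of nodal coordinates, so its time derivative is
the same combination of the nodal speeds. Evaluated on the speed field, the average of two
neighbouring metric terms is, as an algebraic identity, the difference of two half-point speeds.
-/

/-- Half-point mesh speed `ẇ_{j-1/2,k}` built from the nodal speed field `w`:
`(1/8)[w_{j,k-1}+w_{j-1,k-1}+2w_{j,k}+2w_{j-1,k}+w_{j,k+1}+w_{j-1,k+1}]`. -/
noncomputable def speedH (w : ℤ → ℤ → ℝ → ℝ) (j k : ℤ) (t : ℝ) : ℝ :=
  (1 / 8) * (w j (k - 1) t + w (j - 1) (k - 1) t + 2 * w j k t + 2 * w (j - 1) k t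
    + w j (k + 1) t + w (j - 1) (k + 1) t)

/-- Half-point mesh speed `ẇ_{j,k-1/2}` built from the nodal speed field `w`:
`(1/8)[w_{j-1,k}+w_{j-1,k-1}+2w_{j,k}+2w_{j,k-1}+w_{j+1,k}+w_{j+1,k-1}]`. -/
noncomputable def speedV (w : ℤ → ℤ → ℝ → ℝ) (j k : ℤ) (t : ℝ) : ℝ :=
  (1 / 8) * (w (j - 1) k t + w (j - 1) (k - 1) t + 2 * w j k t + 2 * w j (k - 1) t
    + w (j + 1) k t + w (j + 1) (k - 1) t)

/-- Metric term `X_{j-1/2,k} = (Jξ_x)_{j-1/2,k} = (1/4)[y_{j,k+1}-y_{j,k-1}+y_{j-1,k+1}-y_{j-1,k-1}]`. -/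
noncomputable def metX (y : ℤ → ℤ → ℝ → ℝ) (j k : ℤ) (t : ℝ) : ℝ :=
  (1 / 4) * (y j (k + 1) t - y j (k - 1) t + y (j - 1) (k + 1) t - y (j - 1) (k - 1) t)

/-- Metric term `Y_{j-1/2,k} = (Jξ_y)_{j-1/2,k} = -(1/4)[x_{j,k+1}-x_{j,k-1}+x_{j-1,k+1}-x_{j-1,k-1}]`. -/
noncomputable def metY (x : ℤ → ℤ → ℝ → ℝ) (j k : ℤ) (t : ℝ) : ℝ :=
  -(1 / 4) * (x j (k + 1) t - x j (k - 1) t + x (j - 1) (k + 1) t - x (j - 1) (k - 1) t)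

/-- Metric term `Ξ_{j,k-1/2} = (Jη_x)_{j,k-1/2} = -(1/4)[y_{j+1,k}-y_{j-1,k}+y_{j+1,k-1}-y_{j-1,k-1}]`. -/
noncomputable def metXi (y : ℤ → ℤ → ℝ → ℝ) (j k : ℤ) (t : ℝ) : ℝ :=
  -(1 / 4) * (y (j + 1) k t - y (j - 1) k t + y (j + 1) (k - 1) t - y (j - 1) (k - 1) t)

/-- Metric term `Υ_{j,k-1/2} = (Jη_y)_{j,k-1/2} = (1/4)[x_{j+1,k}-x_{j-1,k}+x_{j+1,k-1}-x_{j-1,k-1}]`. -/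
noncomputable def metUpsilon (x : ℤ → ℤ → ℝ → ℝ) (j k : ℤ) (t : ℝ) : ℝ :=
  (1 / 4) * (x (j + 1) k t - x (j - 1) k t + x (j + 1) (k - 1) t - x (j - 1) (k - 1) t)

section

variable {w wd : ℤ → ℤ → ℝ → ℝ} {t : ℝ}

theorem hasDerivAt_metUpsilon (hw : ∀ j k, HasDerivAt (w j k) (wd j k t) t) (j k : ℤ) :
    HasDerivAt (metUpsilon w j k) (metUpsilon wd j k t) t :=
  ((((hw _ _).sub (hw _ _)).add (hw _ _)).sub (hw _ _)).const_mul _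

theorem hasDerivAt_metX (hw : ∀ j k, HasDerivAt (w j k) (wd j k t) t) (j k : ℤ) :
    HasDerivAt (metX w j k) (metX wd j k t) t :=
  ((((hw _ _).sub (hw _ _)).add (hw _ _)).sub (hw _ _)).const_mul _

theorem hasDerivAt_metXi (hw : ∀ j k, HasDerivAt (w j k) (wd j k t) t) (j k : ℤ) :
    HasDerivAt (metXi w j k) (metXi wd j k t) t :=
  ((((hw _ _).sub (hw _ _)).add (hw _ _)).sub (hw _ _)).const_mul _

theorem hasDerivAt_metY (hw : ∀ j k, HasDerivAt (w j k) (wd j k t) t) (j k : ℤ) :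
    HasDerivAt (metY w j k) (metY wd j k t) t :=
  ((((hw _ _).sub (hw _ _)).add (hw _ _)).sub (hw _ _)).const_mul _

end

section

variable (w : ℤ → ℤ → ℝ → ℝ) (j k : ℤ) (t : ℝ)

theorem metUpsilon_average :
    1 / 2 * (metUpsilon w j (k + 1) t + metUpsilon w j k t)
      = speedH w (j + 1) k t - speedH w j k t := by
  simp only [metUpsilon, speedH, add_sub_cancel_right]
  ring

theorem metX_average :
    1 / 2 * (metX w (j + 1) k t + metX w j k t) = speedV w j (k + 1) t - speedV w j k t := by
  simp only [metX, speedV, add_sub_cancel_right]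
  ring

theorem metXi_average :
    1 / 2 * (metXi w j (k + 1) t + metXi w j k t)
      = -(speedH w (j + 1) k t - speedH w j k t) := by
  simp only [metXi, speedH, add_sub_cancel_right]
  ring

theorem metY_average :
    1 / 2 * (metY w (j + 1) k t + metY w j k t) = -(speedV w j (k + 1) t - speedV w j k t) := by
  simp only [metY, speedV, add_sub_cancel_right]
  ring

end

/-- Differentiation identities of Remark 4.2 for the half-point mesh speed and metric
approximations (e4-11)-(e4-13):
(i) `d/dt[(1/2)(Υ_{j,k+1/2} + Υ_{j,k-1/2})] = ẋ_{j+1/2,k} - ẋ_{j-1/2,k}`;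
(ii) `d/dt[(1/2)(X_{j+1/2,k} + X_{j-1/2,k})] = ẏ_{j,k+1/2} - ẏ_{j,k-1/2}`;
(iii) `d/dt[(1/2)(Ξ_{j,k+1/2} + Ξ_{j,k-1/2})] = -(ẏ_{j+1/2,k} - ẏ_{j-1/2,k})`;
(iv) `d/dt[(1/2)(Y_{j+1/2,k} + Y_{j-1/2,k})] = -(ẋ_{j,k+1/2} - ẋ_{j,k-1/2})`. -/
theorem halfpoint_differentiation_identities
    (x y xd yd : ℤ → ℤ → ℝ → ℝ)
    (hx : ∀ (j k : ℤ) (t : ℝ), HasDerivAt (x j k) (xd j k t) t)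
    (hy : ∀ (j k : ℤ) (t : ℝ), HasDerivAt (y j k) (yd j k t) t) :
    ∀ (j k : ℤ) (t : ℝ),
      HasDerivAt (fun s => (1 / 2 : ℝ) * (metUpsilon x j (k + 1) s + metUpsilon x j k s))
          (speedH xd (j + 1) k t - speedH xd j k t) t
      ∧ HasDerivAt (fun s => (1 / 2 : ℝ) * (metX y (j + 1) k s + metX y j k s))
          (speedV yd j (k + 1) t - speedV yd j k t) t
      ∧ HasDerivAt (fun s => (1 / 2 : ℝ) * (metXi y j (k + 1) s + metXi y j k s))
          (-(speedH yd (j + 1) k t - speedH yd j k t)) t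
      ∧ HasDerivAt (fun s => (1 / 2 : ℝ) * (metY x (j + 1) k s + metY x j k s))
          (-(speedV xd j (k + 1) t - speedV xd j k t)) t := by
  intro j k t
  have hxt : ∀ j k, HasDerivAt (x j k) (xd j k t) t := (hx · · t)
  have hyt : ∀ j k, HasDerivAt (y j k) (yd j k t) t := (hy · · t)
  refine ⟨?_, ?_, ?_, ?_⟩
  · rw [← metUpsilon_average]
    exact ((hasDerivAt_metUpsilon hxt j (k + 1)).add (hasDerivAt_metUpsilon hxt j k)).const_mul _
  · rw [← metX_average]
    exact ((hasDerivAt_metX hyt (j + 1) k).add (hasDerivAt_metX hyt j k)).const_mul _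
  · rw [← metXi_average]
    exact ((hasDerivAt_metXi hyt j (k + 1)).add (hasDerivAt_metXi hyt j k)).const_mul _
  · rw [← metY_average]
    exact ((hasDerivAt_metY hxt (j + 1) k).add (hasDerivAt_metY hxt j k)).const_mul _
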